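/- Let p, q ∈ ℂ with |p| < 1 and |q| < 1. Then the special value of the elliptic Gamma function at z = −1 satisfies Γ_{p,q}(−1) = (p; p²)_∞ · (q; q²)_∞ / 2. -/

import Mathlib

open Complex

/-- The elliptic Gamma function `Γ_{a,b}(z) = ∏_{i,j ≥ 0} (1 - a^{i+1} b^{j+1}/z)/(1 - a^i b^j z)`. -/
noncomputable def ellGamma (a b z : ℂ) : ℂ :=
  ∏' ij : ℕ × ℕ, (1 - a ^ (ij.1 + 1) * b ^ (ij.2 + 1) / z) / (1 - a ^ ij.1 * b ^ ij.2 * z)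

/-- The infinite Pochhammer symbol `(x; r)_∞ = ∏_{k ≥ 0} (1 - r^k x)`. -/
noncomputable def qPoch (x r : ℂ) : ℂ :=
  ∏' k : ℕ, (1 - r ^ k * x)

lemma hasProdAux {ι : Type*} {f g : ι → ℂ} (hf : Summable f) (hfg : ∀ i, g i = 1 - f i)
    (h0 : ∀ i, g i ≠ 0) :
    HasProd g (Complex.exp (∑' i, Complex.log (g i))) := by
  have h := hf.clog_one_sub.hasSum.cexp
  have e1 : (fun i => Complex.log (1 - f i)) = fun i => Complex.log (g i) := by
    funext i; rw [hfg]
  rw [e1] at h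
  have e2 : (Complex.exp ∘ fun i => Complex.log (g i)) = g :=
    funext fun i => Complex.exp_log (h0 i)
  rwa [e2] at h

lemma exProd {ι : Type*} (g : ι → ℂ) (f : ι → ℂ) (hf : Summable f) (hfg : ∀ i, g i = 1 - f i)
    (h0 : ∀ i, g i ≠ 0) : ∃ c : ℂ, c ≠ 0 ∧ HasProd g c :=
  ⟨_, Complex.exp_ne_zero _, hasProdAux hf hfg h0⟩

lemma one_add_ne_zero' {z : ℂ} (hz : ‖z‖ < 1) : (1 : ℂ) + z ≠ 0 := by
  intro h
  have hz1 : z = -1 := by linear_combination h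
  rw [hz1] at hz
  simp at hz

lemma one_sub_ne_zero' {z : ℂ} (hz : ‖z‖ < 1) : (1 : ℂ) - z ≠ 0 := by
  intro h
  have hz1 : z = 1 := by linear_combination -h
  rw [hz1] at hz
  simp at hz

set_option maxHeartbeats 1000000 in
/-- Euler identity -/
lemma euler_aux {r : ℂ} (hr : ‖r‖ < 1) :
    ∃ A : ℂ, HasProd (fun n : ℕ => 1 + r ^ (n + 1)) A ∧ A * qPoch r (r ^ 2) = 1 := by
  have hr0 : (0 : ℝ) ≤ ‖r‖ := norm_nonneg r
  have hlt : ∀ n : ℕ, ‖r ^ (n + 1)‖ < 1 := by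
    intro n
    rw [norm_pow]
    exact pow_lt_one₀ hr0 hr n.succ_ne_zero
  have hr2 : ‖r ^ 2‖ < 1 := by
    rw [norm_pow]
    exact pow_lt_one₀ hr0 hr two_ne_zero
  have hlt2 : ∀ n : ℕ, ‖(r ^ 2) ^ (n + 1)‖ < 1 := by
    intro n
    rw [norm_pow]
    exact pow_lt_one₀ (norm_nonneg _) hr2 n.succ_ne_zero
  have hltB : ∀ k : ℕ, ‖(r ^ 2) ^ k * r‖ < 1 := by
    intro k
    rw [norm_mul, norm_pow]
    have h1 : ‖r ^ 2‖ ^ k ≤ 1 := pow_le_one₀ (norm_nonneg _) hr2.le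
    nlinarith [norm_nonneg r, norm_nonneg (r ^ 2), pow_nonneg (norm_nonneg (r ^ 2)) k]
  have hs1 : Summable (fun n : ℕ => r ^ (n + 1)) := by
    simpa [Function.comp_def] using
      (summable_geometric_of_norm_lt_one hr).comp_injective (add_left_injective 1)
  have hs2 : Summable (fun n : ℕ => (r ^ 2) ^ (n + 1)) := by
    simpa [Function.comp_def] using
      (summable_geometric_of_norm_lt_one hr2).comp_injective (add_left_injective 1)
  have hsB : Summable (fun k : ℕ => (r ^ 2) ^ k * r) :=
    (summable_geometric_of_norm_lt_one hr2).mul_right r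
  obtain ⟨A, hAne, hA⟩ := exProd (fun n : ℕ => 1 + r ^ (n + 1)) (fun n => -(r ^ (n + 1)))
    hs1.neg (fun n => by ring) (fun n => one_add_ne_zero' (hlt n))
  obtain ⟨C, hCne, hC⟩ := exProd (fun n : ℕ => 1 - r ^ (n + 1)) (fun n => r ^ (n + 1))
    hs1 (fun n => rfl) (fun n => one_sub_ne_zero' (hlt n))
  obtain ⟨D, hDne, hD⟩ := exProd (fun n : ℕ => 1 - (r ^ 2) ^ (n + 1)) (fun n => (r ^ 2) ^ (n + 1))
    hs2 (fun n => rfl) (fun n => one_sub_ne_zero' (hlt2 n))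
  obtain ⟨B, hBne, hB⟩ := exProd (fun k : ℕ => 1 - (r ^ 2) ^ k * r) (fun k => (r ^ 2) ^ k * r)
    hsB (fun n => rfl) (fun k => one_sub_ne_zero' (hltB k))
  -- A * C = D
  have hAC : HasProd (fun n : ℕ => 1 - (r ^ 2) ^ (n + 1)) (A * C) := by
    have h := hA.mul hC
    have e : (fun n : ℕ => (1 + r ^ (n + 1)) * (1 - r ^ (n + 1)))
        = fun n : ℕ => 1 - (r ^ 2) ^ (n + 1) := by
      funext n
      have : (r ^ 2) ^ (n + 1) = r ^ (n + 1) * r ^ (n + 1) := by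
        rw [← pow_mul, ← pow_add]; ring_nf
      rw [this]; ring
    rwa [e] at h
  have hACD : A * C = D := hAC.unique hD
  -- C = B * D via even/odd split
  have he : HasProd (fun k : ℕ => (fun n : ℕ => 1 - r ^ (n + 1)) (2 * k)) B := by
    have e : (fun k : ℕ => 1 - (r ^ 2) ^ k * r) = fun k : ℕ => 1 - r ^ (2 * k + 1) := by
      funext k
      rw [← pow_mul, ← pow_succ]
    rwa [e] at hB
  have ho : HasProd (fun k : ℕ => (fun n : ℕ => 1 - r ^ (n + 1)) (2 * k + 1)) D := by
    have e : (fun n : ℕ => 1 - (r ^ 2) ^ (n + 1)) = fun k : ℕ => 1 - r ^ (2 * k + 1 + 1) := by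
      funext k
      rw [← pow_mul]
      ring_nf
    rwa [e] at hD
  have hCBD : C = B * D := hC.unique (he.even_mul_odd ho)
  have hq : qPoch r (r ^ 2) = B := hB.tprod_eq
  refine ⟨A, hA, ?_⟩
  rw [hq]
  have h3 : A * B * D = 1 * D := by
    calc A * B * D = A * (B * D) := by ring
    _ = A * C := by rw [← hCBD]
    _ = D := hACD
    _ = 1 * D := by rw [one_mul]
  exact mul_right_cancel₀ hDne h3

/-- Special value `Γ_{p,q}(-1) = (p;p²)_∞ (q;q²)_∞ / 2`. -/
theorem ellGamma_special_neg_one (p q : ℂ) (hp : ‖p‖ < 1)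
    (hq : ‖q‖ < 1) :
    ellGamma p q (-1) = qPoch p (p ^ 2) * qPoch q (q ^ 2) / 2 := by
  have hp' : ‖p‖ < 1 := by exact hp
  have hq' : ‖q‖ < 1 := by exact hq
  set m : ℝ := max ‖p‖ ‖q‖ with hm
  have hm1 : m < 1 := max_lt hp' hq'
  have hm0 : (0 : ℝ) ≤ m := le_trans (norm_nonneg p) (le_max_left _ _)
  -- pointwise bound
  have hb : ∀ i j : ℕ, i + j ≠ 0 → ‖p ^ i * q ^ j‖ ≤ m := by
    intro i j hij
    have h1 : ‖p‖ ^ i ≤ m ^ i := pow_le_pow_left₀ (norm_nonneg _) (le_max_left _ _) i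
    have h2 : ‖q‖ ^ j ≤ m ^ j := pow_le_pow_left₀ (norm_nonneg _) (le_max_right _ _) j
    have h3 : m ^ (i + j) ≤ m := by
      calc m ^ (i + j) ≤ m ^ 1 := pow_le_pow_of_le_one hm0 hm1.le (by omega)
      _ = m := pow_one m
    calc ‖p ^ i * q ^ j‖ = ‖p‖ ^ i * ‖q‖ ^ j := by rw [norm_mul, norm_pow, norm_pow]
    _ ≤ m ^ i * m ^ j :=
      mul_le_mul h1 h2 (pow_nonneg (norm_nonneg q) j) (pow_nonneg hm0 i)
    _ = m ^ (i + j) := (pow_add m i j).symm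
    _ ≤ m := h3
  have hne : ∀ ij : ℕ × ℕ, (1 : ℂ) + p ^ ij.1 * q ^ ij.2 ≠ 0 := by
    intro ij
    by_cases h : ij.1 + ij.2 = 0
    · obtain ⟨h1, h2⟩ := Nat.add_eq_zero.mp h
      rw [h1, h2]
      norm_num
    · exact one_add_ne_zero' (lt_of_le_of_lt (hb ij.1 ij.2 h) hm1)
  have hlow : ∀ ij : ℕ × ℕ, 1 - m ≤ ‖(1 : ℂ) + p ^ ij.1 * q ^ ij.2‖ := by
    intro ij
    by_cases h : ij.1 + ij.2 = 0
    · obtain ⟨h1, h2⟩ := Nat.add_eq_zero.mp h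
      rw [h1, h2]
      norm_num
      linarith
    · have hx : ‖p ^ ij.1 * q ^ ij.2‖ ≤ m := hb ij.1 ij.2 h
      have htri : (1 : ℝ) ≤ ‖(1 : ℂ) + p ^ ij.1 * q ^ ij.2‖ + ‖p ^ ij.1 * q ^ ij.2‖ := by
        calc (1 : ℝ) = ‖((1 : ℂ) + p ^ ij.1 * q ^ ij.2) - p ^ ij.1 * q ^ ij.2‖ := by norm_num
        _ ≤ _ := norm_sub_le _ _
      linarith
  -- summability
  have hgp : Summable (fun n : ℕ => ‖p ^ n‖) := by
    simpa [norm_pow] using summable_geometric_of_lt_one (norm_nonneg p) hp'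
  have hgq : Summable (fun n : ℕ => ‖q ^ n‖) := by
    simpa [norm_pow] using summable_geometric_of_lt_one (norm_nonneg q) hq'
  have hu : Summable (fun ij : ℕ × ℕ => p ^ ij.1 * q ^ ij.2) :=
    summable_mul_of_summable_norm hgp hgq
  have hinj1 : Function.Injective (fun ij : ℕ × ℕ => (ij.1 + 1, ij.2)) := by
    intro a b hab
    simp only [Prod.ext_iff] at hab ⊢
    omega
  have hinj2 : Function.Injective (fun ij : ℕ × ℕ => (ij.1 + 1, ij.2 + 1)) := by
    intro a b hab
    simp only [Prod.ext_iff] at hab ⊢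
    omega
  have hu1 : Summable (fun ij : ℕ × ℕ => p ^ (ij.1 + 1) * q ^ ij.2) := by
    simpa [Function.comp_def] using hu.comp_injective hinj1
  have hu2 : Summable (fun ij : ℕ × ℕ => p ^ (ij.1 + 1) * q ^ (ij.2 + 1)) := by
    simpa [Function.comp_def] using hu.comp_injective hinj2
  -- the three double products
  obtain ⟨E0, hE0ne, hF0⟩ := exProd (fun ij : ℕ × ℕ => 1 + p ^ ij.1 * q ^ ij.2)
    (fun ij => -(p ^ ij.1 * q ^ ij.2)) hu.neg (fun ij => by ring) hne
  obtain ⟨E1, hE1ne, hV⟩ := exProd (fun ij : ℕ × ℕ => 1 + p ^ (ij.1 + 1) * q ^ ij.2)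
    (fun ij => -(p ^ (ij.1 + 1) * q ^ ij.2)) hu1.neg (fun ij => by ring)
    (fun ij => hne (ij.1 + 1, ij.2))
  obtain ⟨E2, hE2ne, hW⟩ := exProd (fun ij : ℕ × ℕ => 1 + p ^ (ij.1 + 1) * q ^ (ij.2 + 1))
    (fun ij => -(p ^ (ij.1 + 1) * q ^ (ij.2 + 1))) hu2.neg (fun ij => by ring)
    (fun ij => hne (ij.1 + 1, ij.2 + 1))
  -- Euler products
  obtain ⟨Ap, hAp, hApB⟩ := euler_aux hp'
  obtain ⟨Aq, hAq, hAqB⟩ := euler_aux hq'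
  -- split 1: along i = 0
  have hWq : HasProd (fun j : ℕ => (1 : ℂ) + q ^ j) ((1 + q ^ 0) * Aq) :=
    HasProd.zero_mul hAq
  set s : Set (ℕ × ℕ) := {ij | ij.1 = 0} with hs
  let es : ℕ ≃ s :=
    { toFun := fun j => ⟨(0, j), rfl⟩
      invFun := fun x => x.1.2
      left_inv := fun j => rfl
      right_inv := fun x => by
        apply Subtype.ext
        obtain ⟨⟨i, j⟩, hx⟩ := x
        simp only [hs, Set.mem_setOf_eq] at hx
        simp [hx] }
  let et : ℕ × ℕ ≃ ↥sᶜ :=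
    { toFun := fun ij => ⟨(ij.1 + 1, ij.2), by simp [hs]⟩
      invFun := fun x => (x.1.1 - 1, x.1.2)
      left_inv := fun ij => by simp
      right_inv := fun x => by
        apply Subtype.ext
        obtain ⟨⟨i, j⟩, hx⟩ := x
        simp only [hs, Set.mem_compl_iff, Set.mem_setOf_eq] at hx
        simp
        omega }
  have hs_part : HasProd ((fun ij : ℕ × ℕ => 1 + p ^ ij.1 * q ^ ij.2) ∘ (↑) : s → ℂ)
      ((1 + q ^ 0) * Aq) := by
    rw [← Equiv.hasProd_iff es]
    have e : (((fun ij : ℕ × ℕ => 1 + p ^ ij.1 * q ^ ij.2) ∘ (↑)) ∘ es)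
        = fun j : ℕ => (1 : ℂ) + q ^ j := by
      funext j
      simp [es]
    rw [e]
    exact hWq
  have ht_part : HasProd ((fun ij : ℕ × ℕ => 1 + p ^ ij.1 * q ^ ij.2) ∘ (↑) : ↥sᶜ → ℂ) E1 := by
    rw [← Equiv.hasProd_iff et]
    exact hV
  have hsplit1 : E0 = (1 + q ^ 0) * Aq * E1 := hF0.unique (hs_part.mul_compl ht_part)
  -- split 2: along j = 0
  set s2 : Set (ℕ × ℕ) := {ij | ij.2 = 0} with hs2
  let es2 : ℕ ≃ s2 :=
    { toFun := fun i => ⟨(i, 0), rfl⟩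
      invFun := fun x => x.1.1
      left_inv := fun i => rfl
      right_inv := fun x => by
        apply Subtype.ext
        obtain ⟨⟨i, j⟩, hx⟩ := x
        simp only [hs2, Set.mem_setOf_eq] at hx
        simp [hx] }
  let et2 : ℕ × ℕ ≃ ↥s2ᶜ :=
    { toFun := fun ij => ⟨(ij.1, ij.2 + 1), by simp [hs2]⟩
      invFun := fun x => (x.1.1, x.1.2 - 1)
      left_inv := fun ij => by simp
      right_inv := fun x => by
        apply Subtype.ext
        obtain ⟨⟨i, j⟩, hx⟩ := x
        simp only [hs2, Set.mem_compl_iff, Set.mem_setOf_eq] at hx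
        simp
        omega }
  have hs2_part : HasProd ((fun ij : ℕ × ℕ => 1 + p ^ (ij.1 + 1) * q ^ ij.2) ∘ (↑) : s2 → ℂ)
      Ap := by
    rw [← Equiv.hasProd_iff es2]
    have e : (((fun ij : ℕ × ℕ => 1 + p ^ (ij.1 + 1) * q ^ ij.2) ∘ (↑)) ∘ es2)
        = fun i : ℕ => (1 : ℂ) + p ^ (i + 1) := by
      funext i
      simp [es2]
    rw [e]
    exact hAp
  have ht2_part : HasProd ((fun ij : ℕ × ℕ => 1 + p ^ (ij.1 + 1) * q ^ ij.2) ∘ (↑) : ↥s2ᶜ → ℂ)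
      E2 := by
    rw [← Equiv.hasProd_iff et2]
    exact hW
  have hsplit2 : E1 = Ap * E2 := hV.unique (hs2_part.mul_compl ht2_part)
  -- the ratio product
  set H : ℕ × ℕ → ℂ := fun ij =>
    (1 + p ^ (ij.1 + 1) * q ^ (ij.2 + 1)) / (1 + p ^ ij.1 * q ^ ij.2) with hH_def
  have hHne : ∀ ij, H ij ≠ 0 := fun ij =>
    div_ne_zero (hne (ij.1 + 1, ij.2 + 1)) (hne ij)
  have hmaj : Summable (fun ij : ℕ × ℕ => (‖p‖ ^ ij.1 * ‖q‖ ^ ij.2) * (2 / (1 - m))) := by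
    apply Summable.mul_right
    apply summable_mul_of_summable_norm (f := fun n : ℕ => ‖p‖ ^ n) (g := fun n : ℕ => ‖q‖ ^ n)
    · have e : (fun n : ℕ => ‖(‖p‖ ^ n : ℝ)‖) = fun n : ℕ => ‖p‖ ^ n :=
        funext fun n => by rw [Real.norm_eq_abs, _root_.abs_of_nonneg (pow_nonneg (norm_nonneg p) n)]
      rw [e]
      exact summable_geometric_of_lt_one (norm_nonneg p) hp'
    · have e : (fun n : ℕ => ‖(‖q‖ ^ n : ℝ)‖) = fun n : ℕ => ‖q‖ ^ n :=
        funext fun n => by rw [Real.norm_eq_abs, _root_.abs_of_nonneg (pow_nonneg (norm_nonneg q) n)]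
      rw [e]
      exact summable_geometric_of_lt_one (norm_nonneg q) hq'
  have hHsum : Summable (fun ij : ℕ × ℕ => 1 - H ij) := by
    apply Summable.of_norm_bounded hmaj
    intro ij
    have hden := hne ij
    have heq : 1 - H ij
        = (p ^ ij.1 * q ^ ij.2 - p ^ (ij.1 + 1) * q ^ (ij.2 + 1)) /
          (1 + p ^ ij.1 * q ^ ij.2) := by
      rw [hH_def]
      field_simp
      ring
    rw [heq, norm_div]
    have hnum : ‖p ^ ij.1 * q ^ ij.2 - p ^ (ij.1 + 1) * q ^ (ij.2 + 1)‖
        ≤ 2 * (‖p‖ ^ ij.1 * ‖q‖ ^ ij.2) := by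
      have h1 : ‖p ^ ij.1 * q ^ ij.2‖ = ‖p‖ ^ ij.1 * ‖q‖ ^ ij.2 := by
        rw [norm_mul, norm_pow, norm_pow]
      have h2 : ‖p ^ (ij.1 + 1) * q ^ (ij.2 + 1)‖ ≤ ‖p‖ ^ ij.1 * ‖q‖ ^ ij.2 := by
        rw [norm_mul, norm_pow, norm_pow, pow_succ, pow_succ]
        have hp1 : ‖p‖ ^ ij.1 * ‖p‖ ≤ ‖p‖ ^ ij.1 * 1 :=
          mul_le_mul_of_nonneg_left hp'.le (pow_nonneg (norm_nonneg p) ij.1)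
        have hq1 : ‖q‖ ^ ij.2 * ‖q‖ ≤ ‖q‖ ^ ij.2 * 1 :=
          mul_le_mul_of_nonneg_left hq'.le (pow_nonneg (norm_nonneg q) ij.2)
        calc ‖p‖ ^ ij.1 * ‖p‖ * (‖q‖ ^ ij.2 * ‖q‖)
            ≤ ‖p‖ ^ ij.1 * 1 * (‖q‖ ^ ij.2 * 1) := by
              apply mul_le_mul hp1 hq1 (by positivity) (by positivity)
        _ = ‖p‖ ^ ij.1 * ‖q‖ ^ ij.2 := by ring
      calc ‖p ^ ij.1 * q ^ ij.2 - p ^ (ij.1 + 1) * q ^ (ij.2 + 1)‖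
          ≤ ‖p ^ ij.1 * q ^ ij.2‖ + ‖p ^ (ij.1 + 1) * q ^ (ij.2 + 1)‖ := norm_sub_le _ _
      _ ≤ ‖p‖ ^ ij.1 * ‖q‖ ^ ij.2 + ‖p‖ ^ ij.1 * ‖q‖ ^ ij.2 := by
          rw [h1]; exact add_le_add_right h2 _
      _ = 2 * (‖p‖ ^ ij.1 * ‖q‖ ^ ij.2) := by ring
    calc ‖p ^ ij.1 * q ^ ij.2 - p ^ (ij.1 + 1) * q ^ (ij.2 + 1)‖ /
          ‖(1 : ℂ) + p ^ ij.1 * q ^ ij.2‖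
        ≤ (2 * (‖p‖ ^ ij.1 * ‖q‖ ^ ij.2)) / (1 - m) :=
          div_le_div₀ (by positivity) hnum (by linarith) (hlow ij)
    _ = (‖p‖ ^ ij.1 * ‖q‖ ^ ij.2) * (2 / (1 - m)) := by ring
  obtain ⟨Eh, hEhne, hH⟩ := exProd H (fun ij => 1 - H ij) hHsum (fun ij => by ring) hHne
  -- ellGamma = tprod H = Eh
  have hellG : ellGamma p q (-1) = Eh := by
    rw [ellGamma, ← hH.tprod_eq]
    apply tprod_congr
    intro ij
    rw [hH_def]
    rw [div_neg, div_one, sub_neg_eq_add, mul_neg_one, sub_neg_eq_add]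
  -- Eh * E0 = E2
  have hmulrel : Eh * E0 = E2 := by
    have h := hH.mul hF0
    have e : (fun ij : ℕ × ℕ => H ij * (1 + p ^ ij.1 * q ^ ij.2))
        = fun ij : ℕ × ℕ => 1 + p ^ (ij.1 + 1) * q ^ (ij.2 + 1) := by
      funext ij
      rw [hH_def]
      exact div_mul_cancel₀ _ (hne ij)
    rw [e] at h
    exact h.unique hW
  -- collect
  have hq0 : (1 : ℂ) + q ^ 0 = 2 := by norm_num
  rw [hsplit1, hsplit2, hq0] at hmulrel
  -- hmulrel : Eh * (2 * Aq * (Ap * E2)) = E2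
  have hkey : Eh * (2 * Aq * Ap) = 1 := by
    have h : (Eh * (2 * Aq * Ap)) * E2 = 1 * E2 := by
      rw [one_mul]
      calc Eh * (2 * Aq * Ap) * E2 = Eh * (2 * Aq * (Ap * E2)) := by ring
      _ = E2 := hmulrel
    exact mul_right_cancel₀ hE2ne h
  rw [hellG]
  linear_combination (qPoch p (p ^ 2) * qPoch q (q ^ 2) / 2) * hkey
    - (Eh * Aq * qPoch q (q ^ 2)) * hApB - Eh * hAqB
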